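/- arXiv:1309.1305 — 2 statements merged into one kernel-verified Lean document; each statement's English description precedes it below -/
import Mathlib

section
/- Existence and essential uniqueness of the Dirichlet minimizer: if V_AB is nonempty, then there exists h_AB ∈ V_AB with E(h_AB) = Cap(A,B) = inf_{h∈V_AB} E(h); moreover any two minimizers f,g ∈ V_AB satisfy f(x)−f(y) = g(x)−g(y) for K-almost every (x,y) ∈ Ω×Ω. -/
open MeasureTheory ProbabilityTheory ENNReal Set Filter
open scoped Classical

noncomputable section

variable {Ω : Type*}

/-- The Dirichlet form `E(h) = (1/2) ∫ (h(y)-h(x))² K(dx,dy)` (in `ℝ≥0∞`). -/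
def dirichletForm [MeasurableSpace Ω] (K : Measure (Ω × Ω)) (h : Ω → ℝ) : ℝ≥0∞ :=
  2⁻¹ * ∫⁻ p, ENNReal.ofReal ((h p.2 - h p.1) ^ 2) ∂K

/-- The class `V_AB` of test potentials. -/
def VAB [MeasurableSpace Ω] (A B : Set Ω) (K : Measure (Ω × Ω)) : Set (Ω → ℝ) :=
  {h | Measurable h ∧ (∀ x ∈ A, h x = 1) ∧ (∀ x ∈ B, h x = 0) ∧
    (∀ x, 0 ≤ h x ∧ h x ≤ 1) ∧ dirichletForm K h < ⊤}

/-- The capacity `Cap(A,B)`, defined by the Dirichlet principle. -/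
def Cap [MeasurableSpace Ω] (A B : Set Ω) (K : Measure (Ω × Ω)) : ℝ≥0∞ :=
  ⨅ h ∈ VAB A B K, dirichletForm K h

/-- Finite paths `(γ₀, …, γ_{n+1})` with at least one edge. -/
abbrev PathSpace (Ω : Type*) := Σ n : ℕ, Fin (n + 2) → Ω

/-- The set `Γ_AB` of finite paths from `A` to `B` not touching `B` before the end. -/
def GammaAB (A B : Set Ω) : Set (PathSpace Ω) :=
  {γ | γ.2 0 ∈ A ∧ γ.2 (Fin.last (γ.1 + 1)) ∈ B ∧
    ∀ i : Fin (γ.1 + 2), 0 < (i : ℕ) → (i : ℕ) < γ.1 + 1 → γ.2 i ∉ B}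

/-- Sum of `g` over the (directed) edges of the path `γ`. -/
def pathSum (g : Ω × Ω → ℝ≥0∞) (γ : PathSpace Ω) : ℝ≥0∞ :=
  ∑ j : Fin (γ.1 + 1), g (γ.2 j.castSucc, γ.2 j.succ)

/-- `Φ` is the edge measure `Φ_P` of the path measure `P`. -/
def IsEdgeMeasure [MeasurableSpace Ω] (P : Measure (PathSpace Ω)) (Φ : Measure (Ω × Ω)) : Prop :=
  ∀ g : Ω × Ω → ℝ≥0∞, Measurable g → ∫⁻ p, g p ∂Φ = ∫⁻ γ, pathSum g γ ∂P

/-- `Φ` is a unit flow from `A` to `B`. -/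
def IsUnitFlow [MeasurableSpace Ω] (A B : Set Ω) (Φ : Measure (Ω × Ω)) : Prop :=
  SigmaFinite Φ ∧
  Φ (A ×ˢ univ) = 1 ∧ Φ (univ ×ˢ A) = 0 ∧
  Φ (univ ×ˢ B) = 1 ∧ Φ (B ×ˢ univ) = 0 ∧
  (∀ C : Set Ω, MeasurableSet C → C ⊆ (A ∪ B)ᶜ → Φ (C ×ˢ univ) = Φ (univ ×ˢ C)) ∧
  ∃ χ : Set (Ω × Ω), MeasurableSet χ ∧ Φ χᶜ = 0 ∧ ∀ x y : Ω, (x, y) ∈ χ → (y, x) ∉ χ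

/-- `χ` contains no loops. -/
def NoLoops (χ : Set (Ω × Ω)) : Prop :=
  ∀ (n : ℕ) (γ : Fin (n + 2) → Ω), γ (Fin.last (n + 1)) = γ 0 →
    ∃ j : Fin (n + 1), (γ j.castSucc, γ j.succ) ∉ χ

/-- `Φ` is a loop-free unit flow from `A` to `B`. -/
def IsLoopFreeUnitFlow [MeasurableSpace Ω] (A B : Set Ω) (Φ : Measure (Ω × Ω)) : Prop :=
  IsUnitFlow A B Φ ∧
  ∃ χ : Set (Ω × Ω), MeasurableSet χ ∧ Φ χᶜ = 0 ∧
    (∀ x y : Ω, (x, y) ∈ χ → (y, x) ∉ χ) ∧ NoLoops χ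

/-- `Φ(dx,dy) = ν(dx) ℓ(x,dy)` with `ν = Φ.fst` the left marginal. -/
def Disintegrates [MeasurableSpace Ω] (Φ : Measure (Ω × Ω)) (ℓ : Kernel Ω Ω) : Prop :=
  ∀ g : Ω × Ω → ℝ≥0∞, Measurable g →
    ∫⁻ p, g p ∂Φ = ∫⁻ x, ∫⁻ y, g (x, y) ∂(ℓ x) ∂Φ.fst

/-- Finite-dimensional distributions of the Markov chain with initial law `μ0` and kernel `ℓ`. -/
def fdd [MeasurableSpace Ω] (μ0 : Measure Ω) (ℓ : Kernel Ω Ω) :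
    (n : ℕ) → Measure (Fin (n + 1) → Ω)
  | 0 => μ0.map (fun x => fun _ => x)
  | n + 1 => (fdd μ0 ℓ n).bind (fun p => (ℓ (p (Fin.last n))).map (Fin.snoc p))

/-- `P` is the law of the Markov chain with initial law `μ0` and transition kernel `ℓ`. -/
def IsChainLaw [MeasurableSpace Ω] (μ0 : Measure Ω) (ℓ : Kernel Ω Ω)
    (P : Measure (ℕ → Ω)) : Prop :=
  IsProbabilityMeasure P ∧
  ∀ n : ℕ, P.map (fun ω (i : Fin (n + 1)) => ω (i : ℕ)) = fdd μ0 ℓ n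

/-- `Σ_{n=1}^{τ_B} g(Y_{n-1}, Y_n)`, where `τ_B = min{n ≥ 1 : Y_n ∈ B}`. -/
def stoppedSum (B : Set Ω) (g : Ω × Ω → ℝ≥0∞) (ω : ℕ → Ω) : ℝ≥0∞ :=
  ∑' n : ℕ, if ∀ m, 1 ≤ m → m ≤ n → ω m ∉ B then g (ω n, ω (n + 1)) else 0

/-- The event `τ_B < ∞`. -/
def HitsB (B : Set Ω) (ω : ℕ → Ω) : Prop := ∃ n : ℕ, 1 ≤ n ∧ ω n ∈ B

/-- `τ_B`, viewed in `ℝ≥0∞`. -/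
def hitTimeE (B : Set Ω) (ω : ℕ → Ω) : ℝ≥0∞ :=
  ∑' n : ℕ, if ∀ m, 1 ≤ m → m ≤ n → ω m ∉ B then 1 else 0

/-- The Berman-Konsowa functional `E^Φ[ (Σ_{n=1}^{τ_B} g(Y_{n-1},Y_n))⁻¹ ]`, with the
reciprocal taken to be `0` on `{τ_B = ∞}` (and automatically `0` when the sum is infinite). -/
def bkValue [MeasurableSpace Ω] (B : Set Ω) (g : Ω × Ω → ℝ≥0∞)
    (P : Measure (ℕ → Ω)) : ℝ≥0∞ :=
  ∫⁻ ω, (if HitsB B ω then (stoppedSum B g ω)⁻¹ else 0) ∂P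

end

/-!
`VAB A B K` is convex and `E` is a quadratic form, so the parallelogram law applied to the midpoint
gives `4 Cap + E(f - g) ≤ 2 (E f + E g)` for `f, g ∈ V_AB`. For two minimizers this forces
`E(f - g) = 0`, which is the uniqueness. For a minimizing sequence with `E(h_n) ≤ Cap + 4⁻ⁿ` it
makes the increments `h_n(y) - h_n(x)` Cauchy in `L²(K)` fast enough to converge `K`-a.e. Since
`0 ≤ h_n ≤ 1`, the pointwise `limsup` `H` of the `h_n` has these limits as its increments, and
Fatou's lemma gives `E(H) ≤ Cap`.
-/

open Topology

lemma limsup_add_of_tendsto {ι : Type*} {f : Filter ι} [f.NeBot] {u v : ι → ℝ} {L : ℝ}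
    (hu₁ : IsBoundedUnder (· ≤ ·) f u) (hu₂ : IsBoundedUnder (· ≥ ·) f u)
    (hv : Tendsto v f (𝓝 L)) : limsup (u + v) f = limsup u f + L := by
  refine le_antisymm ?_ ?_
  · rw [← hv.limsup_eq]
    exact limsup_add_le hu₂ hu₁ hv.isBoundedUnder_ge.isCoboundedUnder_le hv.isBoundedUnder_le
  · rw [← hv.liminf_eq]
    exact le_limsup_add hu₁ hu₂.isCoboundedUnder_le hv.isBoundedUnder_le hv.isBoundedUnder_ge

def discreteGrad {Ω : Type*} (h : Ω → ℝ) (p : Ω × Ω) : ℝ := h p.2 - h p.1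

section

variable {Ω : Type*}

@[simp] lemma discreteGrad_add (f g : Ω → ℝ) :
    discreteGrad (f + g) = discreteGrad f + discreteGrad g := by
  ext p; simp only [discreteGrad, Pi.add_apply]; ring

@[simp] lemma discreteGrad_sub (f g : Ω → ℝ) :
    discreteGrad (f - g) = discreteGrad f - discreteGrad g := by
  ext p; simp only [discreteGrad, Pi.sub_apply]; ring

@[simp] lemma discreteGrad_smul (c : ℝ) (h : Ω → ℝ) :
    discreteGrad (c • h) = c • discreteGrad h := by
  ext p; simp only [discreteGrad, Pi.smul_apply, smul_eq_mul]; ring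

variable [MeasurableSpace Ω]

lemma Measurable.discreteGrad {h : Ω → ℝ} (hh : Measurable h) :
    Measurable (discreteGrad h) :=
  (hh.comp measurable_snd).sub (hh.comp measurable_fst)

variable {K : Measure (Ω × Ω)}

lemma dirichletForm_eq_lintegral (h : Ω → ℝ) :
    dirichletForm K h = 2⁻¹ * ∫⁻ p, ENNReal.ofReal (discreteGrad h p ^ 2) ∂K := rfl

lemma eLpNorm_discreteGrad_sq (h : Ω → ℝ) :
    eLpNorm (discreteGrad h) 2 K ^ 2 = 2 * dirichletForm K h := by
  have hpow := eLpNorm_nnreal_pow_eq_lintegral (f := discreteGrad h) (μ := K) (p := 2) two_ne_zero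
  simp only [NNReal.coe_ofNat, ENNReal.coe_ofNat, ENNReal.rpow_two] at hpow
  rw [dirichletForm_eq_lintegral, ← mul_assoc,
    ENNReal.mul_inv_cancel two_ne_zero ENNReal.ofNat_ne_top, one_mul, hpow]
  congr 1; ext p
  rw [Real.enorm_eq_ofReal_abs, ← ENNReal.ofReal_pow (abs_nonneg _), sq_abs]

lemma dirichletForm_smul (c : ℝ) (h : Ω → ℝ) :
    dirichletForm K (c • h) = ENNReal.ofReal (c ^ 2) * dirichletForm K h := by
  simp only [dirichletForm_eq_lintegral, discreteGrad_smul, Pi.smul_apply, smul_eq_mul, mul_pow,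
    ENNReal.ofReal_mul (sq_nonneg c), lintegral_const_mul' _ _ ENNReal.ofReal_ne_top]
  ring

lemma dirichletForm_add_add_dirichletForm_sub {f g : Ω → ℝ}
    (hf : Measurable f) (hg : Measurable g) :
    dirichletForm K (f + g) + dirichletForm K (f - g)
      = 2 * (dirichletForm K f + dirichletForm K g) := by
  have hpt : ∀ p : Ω × Ω,
      ENNReal.ofReal (discreteGrad (f + g) p ^ 2) + ENNReal.ofReal (discreteGrad (f - g) p ^ 2)
        = 2 * (ENNReal.ofReal (discreteGrad f p ^ 2) + ENNReal.ofReal (discreteGrad g p ^ 2)) := by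
    intro p
    rw [← ENNReal.ofReal_add (by positivity) (by positivity),
      ← ENNReal.ofReal_add (by positivity) (by positivity), ← ENNReal.ofReal_ofNat 2,
      ← ENNReal.ofReal_mul zero_le_two]
    congr 1
    simp only [discreteGrad_add, discreteGrad_sub, Pi.add_apply, Pi.sub_apply]
    ring
  have hmeas : ∀ {h : Ω → ℝ}, Measurable h →
      Measurable fun p => ENNReal.ofReal (discreteGrad h p ^ 2) :=
    fun hh => (hh.discreteGrad.pow_const 2).ennreal_ofReal
  simp only [dirichletForm_eq_lintegral, ← mul_add,
    ← lintegral_add_left (hmeas (hf.add hg)), hpt, lintegral_const_mul' _ _ ENNReal.ofNat_ne_top,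
    lintegral_add_left (hmeas hf)]
  ring

lemma dirichletForm_add_le {f g : Ω → ℝ}
    (hf : Measurable f) (hg : Measurable g) :
    dirichletForm K (f + g) ≤ 2 * (dirichletForm K f + dirichletForm K g) :=
  le_self_add.trans_eq (dirichletForm_add_add_dirichletForm_sub hf hg)

lemma dirichletForm_eq_zero_iff {h : Ω → ℝ} (hh : Measurable h) :
    dirichletForm K h = 0 ↔ ∀ᵐ p ∂K, h p.1 = h p.2 := by
  rw [dirichletForm_eq_lintegral, mul_eq_zero, or_iff_right (by simp),
    lintegral_eq_zero_iff (hh.discreteGrad.pow_const 2).ennreal_ofReal]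
  refine eventually_congr (Eventually.of_forall fun p => ?_)
  simp [discreteGrad, sub_eq_zero, eq_comm]

variable {A B : Set Ω}

lemma convex_VAB : Convex ℝ (VAB A B K) := by
  intro f ⟨hfm, hfA, hfB, hf01, hfE⟩ g ⟨hgm, hgA, hgB, hg01, hgE⟩ a b ha hb hab
  refine ⟨(hfm.const_smul a).add (hgm.const_smul b), fun x hx => ?_, fun x hx => ?_,
    fun x => ?_, ?_⟩
  · simp [hfA x hx, hgA x hx, hab]
  · simp [hfB x hx, hgB x hx]
  · simp only [Pi.add_apply, Pi.smul_apply, smul_eq_mul]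
    obtain ⟨hf0, hf1⟩ := hf01 x
    obtain ⟨hg0, hg1⟩ := hg01 x
    constructor <;> nlinarith
  · calc dirichletForm K (a • f + b • g)
        ≤ 2 * (dirichletForm K (a • f) + dirichletForm K (b • g)) :=
          dirichletForm_add_le (hfm.const_smul a) (hgm.const_smul b)
      _ < ⊤ := by
          rw [dirichletForm_smul, dirichletForm_smul]
          finiteness

lemma cap_le_dirichletForm {h : Ω → ℝ} (hh : h ∈ VAB A B K) : Cap A B K ≤ dirichletForm K h :=
  iInf₂_le h hh

lemma exists_mem_VAB_dirichletForm_lt (hcap : Cap A B K ≠ ⊤) {ε : ℝ≥0∞} (hε : ε ≠ 0) :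
    ∃ h ∈ VAB A B K, dirichletForm K h < Cap A B K + ε := by
  have : (⨅ h ∈ VAB A B K, dirichletForm K h) < Cap A B K + ε := ENNReal.lt_add_right hcap hε
  simpa only [iInf_lt_iff, exists_prop] using this

lemma four_mul_cap_add_dirichletForm_sub_le {f g : Ω → ℝ} (hf : f ∈ VAB A B K)
    (hg : g ∈ VAB A B K) :
    4 * Cap A B K + dirichletForm K (f - g) ≤ 2 * (dirichletForm K f + dirichletForm K g) := by
  have hmid : (2⁻¹ : ℝ) • f + (2⁻¹ : ℝ) • g ∈ VAB A B K :=
    convex_VAB hf hg (by norm_num) (by norm_num) (by norm_num)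
  have hsum : f + g = (2 : ℝ) • ((2⁻¹ : ℝ) • f + (2⁻¹ : ℝ) • g) := by
    rw [smul_add, smul_smul, smul_smul]; norm_num
  rw [← dirichletForm_add_add_dirichletForm_sub hf.1 hg.1, hsum, dirichletForm_smul,
    show ENNReal.ofReal (2 ^ 2) = 4 by norm_num]
  gcongr
  exact cap_le_dirichletForm hmid

lemma dirichletForm_sub_le (hcap : Cap A B K ≠ ⊤) {f g : Ω → ℝ} (hf : f ∈ VAB A B K)
    (hg : g ∈ VAB A B K) {ε : ℝ≥0∞} (hfε : dirichletForm K f ≤ Cap A B K + ε)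
    (hgε : dirichletForm K g ≤ Cap A B K + ε) :
    dirichletForm K (f - g) ≤ 4 * ε := by
  refine (ENNReal.add_le_add_iff_left (by finiteness : 4 * Cap A B K ≠ ⊤)).1 ?_
  calc 4 * Cap A B K + dirichletForm K (f - g)
      ≤ 2 * (dirichletForm K f + dirichletForm K g) := four_mul_cap_add_dirichletForm_sub_le hf hg
    _ ≤ 2 * ((Cap A B K + ε) + (Cap A B K + ε)) := by gcongr
    _ = 4 * Cap A B K + 4 * ε := by ring

lemma ae_tendsto_discreteGrad_of_dirichletForm_le (hcap : Cap A B K ≠ ⊤) {hs : ℕ → Ω → ℝ}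
    (hsV : ∀ n, hs n ∈ VAB A B K) (hsE : ∀ n, dirichletForm K (hs n) ≤ Cap A B K + 4⁻¹ ^ n) :
    ∀ᵐ p ∂K, ∃ l, Tendsto (fun n => discreteGrad (hs n) p) atTop (𝓝 l) := by
  refine Lp.ae_tendsto_of_cauchy_eLpNorm (fun n => (hsV n).1.discreteGrad.aestronglyMeasurable)
    one_le_two (B := fun N => 3 * 2⁻¹ ^ N) ?_ fun N n m hn hm => ?_
  · rw [ENNReal.tsum_mul_left, ENNReal.tsum_geometric, ENNReal.one_sub_inv_two, inv_inv]
    finiteness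
  · have hE : ∀ k ≥ N, dirichletForm K (hs k) ≤ Cap A B K + 4⁻¹ ^ N := fun k hk =>
      (hsE k).trans <| add_le_add_right
        (pow_le_pow_right_of_le_one' (by norm_num : (4 : ℝ≥0∞)⁻¹ ≤ 1) hk) _
    rw [← discreteGrad_sub, ← ENNReal.pow_lt_pow_left_iff two_ne_zero, eLpNorm_discreteGrad_sq]
    calc 2 * dirichletForm K (hs n - hs m) ≤ 2 * (4 * 4⁻¹ ^ N) := by
          gcongr; exact dirichletForm_sub_le hcap (hsV n) (hsV m) (hE n hn) (hE m hm)
      _ < 9 * 4⁻¹ ^ N := by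
          rw [← mul_assoc]
          exact ENNReal.mul_lt_mul_left (by simp) (by simp) (by norm_num)
      _ = (3 * 2⁻¹ ^ N) ^ 2 := by
          have h4 : (2 : ℝ≥0∞)⁻¹ ^ 2 = 4⁻¹ := by rw [← ENNReal.inv_pow]; norm_num
          rw [mul_pow, ← pow_mul, mul_comm N, pow_mul, h4]; norm_num

lemma dirichletForm_le_liminf_of_ae_tendsto {hs : ℕ → Ω → ℝ} {H : Ω → ℝ}
    (hs_meas : ∀ n, Measurable (hs n))
    (hlim : ∀ᵐ p ∂K, Tendsto (fun n => discreteGrad (hs n) p) atTop (𝓝 (discreteGrad H p))) :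
    dirichletForm K H ≤ liminf (fun n => dirichletForm K (hs n)) atTop := by
  calc dirichletForm K H
      = 2⁻¹ * ∫⁻ p, liminf (fun n => ENNReal.ofReal (discreteGrad (hs n) p ^ 2)) atTop ∂K := by
        rw [dirichletForm_eq_lintegral]
        congr 1
        refine lintegral_congr_ae (hlim.mono fun p hp => ?_)
        exact ((ENNReal.continuous_ofReal.tendsto _).comp (hp.pow 2)).liminf_eq.symm
    _ ≤ 2⁻¹ * liminf (fun n => ∫⁻ p, ENNReal.ofReal (discreteGrad (hs n) p ^ 2) ∂K) atTop := by
        gcongr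
        exact lintegral_liminf_le fun n => ((hs_meas n).discreteGrad.pow_const 2).ennreal_ofReal
    _ = liminf (fun n => dirichletForm K (hs n)) atTop :=
        (ENNReal.liminf_const_mul_of_ne_top (by simp)).symm

lemma exists_mem_VAB_dirichletForm_le_liminf {hs : ℕ → Ω → ℝ} (hsV : ∀ n, hs n ∈ VAB A B K)
    (hconv : ∀ᵐ p ∂K, ∃ l, Tendsto (fun n => discreteGrad (hs n) p) atTop (𝓝 l))
    (hE : liminf (fun n => dirichletForm K (hs n)) atTop ≠ ⊤) :
    ∃ H ∈ VAB A B K, dirichletForm K H ≤ liminf (fun n => dirichletForm K (hs n)) atTop := by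
  set H : Ω → ℝ := fun x => limsup (fun n => hs n x) atTop
  have hbdd_above (x : Ω) : IsBoundedUnder (· ≤ ·) atTop (fun n => hs n x) :=
    isBoundedUnder_of ⟨1, fun n => ((hsV n).2.2.2.1 x).2⟩
  have hbdd_below (x : Ω) : IsBoundedUnder (· ≥ ·) atTop (fun n => hs n x) :=
    isBoundedUnder_of ⟨0, fun n => ((hsV n).2.2.2.1 x).1⟩
  have hgrad : ∀ᵐ p ∂K,
      Tendsto (fun n => discreteGrad (hs n) p) atTop (𝓝 (discreteGrad H p)) := by
    filter_upwards [hconv] with p ⟨l, hl⟩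
    have hsplit : (fun n => hs n p.2) = (fun n => hs n p.1) + fun n => discreteGrad (hs n) p := by
      ext n; simp [discreteGrad]
    have hH : discreteGrad H p = l := by
      change limsup (fun n => hs n p.2) atTop - limsup (fun n => hs n p.1) atTop = l
      rw [hsplit, limsup_add_of_tendsto (hbdd_above p.1) (hbdd_below p.1) hl]
      ring
    rwa [hH]
  have hEH := dirichletForm_le_liminf_of_ae_tendsto (fun n => (hsV n).1) hgrad
  refine ⟨H, ⟨Measurable.limsup fun n => (hsV n).1, fun x hx => ?_, fun x hx => ?_,
    fun x => ⟨?_, ?_⟩, hEH.trans_lt hE.lt_top⟩, hEH⟩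
  · simp [H, (hsV _).2.1 x hx]
  · simp [H, (hsV _).2.2.1 x hx]
  · exact le_limsup_of_frequently_le (Frequently.of_forall fun n => ((hsV n).2.2.2.1 x).1)
      (hbdd_above x)
  · exact limsup_le_of_le (hbdd_below x).isCoboundedUnder_le
      (Eventually.of_forall fun n => ((hsV n).2.2.2.1 x).2)

end

theorem dirichlet_minimizer_exists_unique_general
    {Ω : Type*} [MeasurableSpace Ω]
    (K : Measure (Ω × Ω))
    (A B : Set Ω)
    (hne : (VAB A B K).Nonempty) :
    (∃ h ∈ VAB A B K, dirichletForm K h = Cap A B K) ∧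
    (∀ f ∈ VAB A B K, ∀ g ∈ VAB A B K,
      dirichletForm K f = Cap A B K → dirichletForm K g = Cap A B K →
      ∀ᵐ p ∂K, f p.1 - f p.2 = g p.1 - g p.2) := by
  obtain ⟨h₀, h₀V⟩ := hne
  have hcap : Cap A B K ≠ ⊤ := ne_top_of_le_ne_top h₀V.2.2.2.2.ne (cap_le_dirichletForm h₀V)
  refine ⟨?_, fun f hf g hg hfE hgE => ?_⟩
  · choose hs hsV hsE using fun n : ℕ =>
      exists_mem_VAB_dirichletForm_lt hcap (pow_ne_zero n (by norm_num) : (4⁻¹ : ℝ≥0∞) ^ n ≠ 0)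
    have hliminf : liminf (fun n => dirichletForm K (hs n)) atTop ≤ Cap A B K := by
      have hlim : Tendsto (fun n : ℕ => Cap A B K + 4⁻¹ ^ n) atTop (𝓝 (Cap A B K)) := by
        simpa using tendsto_const_nhds.add
          (ENNReal.tendsto_pow_atTop_nhds_zero_of_lt_one (by norm_num : (4⁻¹ : ℝ≥0∞) < 1))
      exact (liminf_le_liminf (Eventually.of_forall fun n => (hsE n).le)).trans hlim.liminf_eq.le
    obtain ⟨H, hHV, hHE⟩ := exists_mem_VAB_dirichletForm_le_liminf hsV
      (ae_tendsto_discreteGrad_of_dirichletForm_le hcap hsV fun n => (hsE n).le)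
      (ne_top_of_le_ne_top hcap hliminf)
    exact ⟨H, hHV, le_antisymm (hHE.trans hliminf) (cap_le_dirichletForm hHV)⟩
  · have h0 : dirichletForm K (f - g) = 0 := by
      simpa using dirichletForm_sub_le hcap hf hg (ε := 0) (by simp [hfE]) (by simp [hgE])
    filter_upwards [(dirichletForm_eq_zero_iff (hf.1.sub hg.1)).1 h0] with p hp
    simp only [Pi.sub_apply] at hp
    linarith

/-- **Existence and essential uniqueness of the Dirichlet minimizer.** -/
theorem dirichlet_minimizer_exists_unique
    {Ω : Type*} [MeasurableSpace Ω] [TopologicalSpace Ω] [PolishSpace Ω] [BorelSpace Ω]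
    (K : Measure (Ω × Ω)) [SigmaFinite K]
    (hKsym : ∀ C D : Set Ω, MeasurableSet C → MeasurableSet D → K (C ×ˢ D) = K (D ×ˢ C))
    (μ : Measure Ω) [SigmaFinite μ] (k : Kernel Ω Ω)
    (hKrep : ∀ C D : Set Ω, MeasurableSet C → MeasurableSet D →
      K (C ×ˢ D) = ∫⁻ x in C, k x D ∂μ)
    (A B : Set Ω) (hA : MeasurableSet A) (hB : MeasurableSet B) (hd : Disjoint A B)
    (hμA : 0 < μ A) (hμB : 0 < μ B)
    (hne : (VAB A B K).Nonempty) :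
    (∃ h ∈ VAB A B K, dirichletForm K h = Cap A B K) ∧
    (∀ f ∈ VAB A B K, ∀ g ∈ VAB A B K,
      dirichletForm K f = Cap A B K → dirichletForm K g = Cap A B K →
      ∀ᵐ p ∂K, f p.1 - f p.2 = g p.1 - g p.2) :=
  dirichlet_minimizer_exists_unique_general K A B hne
end

section
/- Equilibrium charges: under the assumption K((A∪B)×Ω)<∞, the equilibrium charges Q_A = ∫_A (−L h_AB)(x) μ(dx) and Q_B = ∫_B (−L h_AB)(x) μ(dx) of the Dirichlet minimizer h_AB satisfy Q_A = Cap(A,B) and Q_B = −Cap(A,B); in particular Cap(A,B) = E(h_AB) = ∫_A (−L h_AB) dμ. -/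
open MeasureTheory ProbabilityTheory ENNReal Set Filter
open scoped Classical

/-- Minus the generator: `(-Lh)(x) = ∫ (h(x) - h(y)) k(x,dy)`. -/
noncomputable def negL {Ω : Type*} [MeasurableSpace Ω] (k : Kernel Ω Ω) (h : Ω → ℝ) (x : Ω) : ℝ :=
  ∫ y, (h x - h y) ∂(k x)

/-- The harmonic flow `Φ_AB(dx,dy) = c⁻¹ [h(x) - h(y)]₊ K(dx,dy)` (with `c = Cap(A,B)`). -/
noncomputable def harmonicFlow {Ω : Type*} [MeasurableSpace Ω] (K : Measure (Ω × Ω))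
    (c : ℝ≥0∞) (h : Ω → ℝ) : Measure (Ω × Ω) :=
  K.withDensity fun p => c⁻¹ * ENNReal.ofReal (h p.1 - h p.2)

/-! With `∇h (x, y) = h y - h x`, the minimizer `h` satisfies the Euler–Lagrange equation
`∫ ∇h ∇g dK = 0` for every finite-energy `g` vanishing on `A ∪ B`: `h + t g` clipped to `[0, 1]`
is admissible and clipping does not increase `E`, so the quadratic `t ↦ E(h + t g) - E(h)` is
nonnegative. Testing with `g = 1_A - h` and `g = 1_{Bᶜ} - h` gives
`∫ ∇h ∇1_A dK = 2 E(h) = -∫ ∇h ∇1_B dK`. For `K(C × Ω) < ∞`, the symmetry of `K` folds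
`∫ ∇h ∇1_C dK` onto `C × Ω`, where it equals `2 ∫_{C × Ω} (h x - h y) K(dx, dy) = 2 ∫_C (-Lh) dμ`
by the disintegration `K = μ ⊗ k` on `C × Ω`. -/

section

variable {Ω : Type*}

def edgeDiff (f : Ω → ℝ) (p : Ω × Ω) : ℝ := f p.2 - f p.1

theorem Measurable.edgeDiff [MeasurableSpace Ω] {f : Ω → ℝ} (hf : Measurable f) :
    Measurable (edgeDiff f) :=
  (hf.comp measurable_snd).sub (hf.comp measurable_fst)

theorem edgeDiff_add_mul (f g : Ω → ℝ) (t : ℝ) :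
    edgeDiff (fun x => f x + t * g x) = fun p => edgeDiff f p + t * edgeDiff g p := by
  funext p; simp only [edgeDiff]; ring

theorem edgeDiff_sub (f g : Ω → ℝ) :
    edgeDiff (fun x => f x - g x) = fun p => edgeDiff f p - edgeDiff g p := by
  funext p; simp only [edgeDiff]; ring

theorem edgeDiff_const_sub (c : ℝ) (f : Ω → ℝ) :
    edgeDiff (fun x => c - f x) = fun p => -edgeDiff f p := by
  funext p; simp only [edgeDiff]; ring

theorem edgeDiff_indicator_one (C : Set Ω) :
    edgeDiff (C.indicator 1) = (univ ×ˢ C).indicator 1 - (C ×ˢ univ).indicator 1 := by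
  funext p
  by_cases h1 : p.1 ∈ C <;> by_cases h2 : p.2 ∈ C <;> simp [edgeDiff, h1, h2]

theorem abs_edgeDiff_le {f : Ω → ℝ} {M : ℝ} (hM : ∀ x, |f x| ≤ M) (p : Ω × Ω) :
    |edgeDiff f p| ≤ 2 * M :=
  (abs_sub _ _).trans (by linarith [hM p.1, hM p.2])

theorem integrable_edgeDiff_of_abs_le [MeasurableSpace Ω] {ν : Measure (Ω × Ω)}
    [IsFiniteMeasure ν] {f : Ω → ℝ} (hf : Measurable f) {M : ℝ} (hM : ∀ x, |f x| ≤ M) :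
    Integrable (edgeDiff f) ν :=
  .of_bound hf.edgeDiff.aestronglyMeasurable (2 * M) (ae_of_all _ (abs_edgeDiff_le hM))

theorem integral_add_mul_sq {α : Type*} [MeasurableSpace α] {ν : Measure α} {a b : α → ℝ}
    (ha : MemLp a 2 ν) (hb : MemLp b 2 ν) (t : ℝ) :
    ∫ x, (a x + t * b x) ^ 2 ∂ν
      = ∫ x, a x ^ 2 ∂ν + 2 * t * ∫ x, a x * b x ∂ν + t ^ 2 * ∫ x, b x ^ 2 ∂ν := by
  have hab : Integrable (fun x => a x * b x) ν := ha.integrable_mul hb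
  have hab2 : Integrable (fun x => a x ^ 2 + 2 * t * (a x * b x)) ν :=
    ha.integrable_sq.add (hab.const_mul _)
  calc ∫ x, (a x + t * b x) ^ 2 ∂ν
      = ∫ x, a x ^ 2 + 2 * t * (a x * b x) + t ^ 2 * b x ^ 2 ∂ν := by
        congr 1; funext x; ring
    _ = _ := by
        rw [integral_add hab2 (hb.integrable_sq.const_mul _),
          integral_add ha.integrable_sq (hab.const_mul _), integral_const_mul, integral_const_mul]

section DirichletForm

variable [MeasurableSpace Ω] {K : Measure (Ω × Ω)}

theorem dirichletForm_eq_lintegral_edgeDiff (f : Ω → ℝ) :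
    dirichletForm K f = 2⁻¹ * ∫⁻ p, ENNReal.ofReal (edgeDiff f p ^ 2) ∂K :=
  rfl

theorem memLp_edgeDiff_of_dirichletForm_lt_top {f : Ω → ℝ} (hf : Measurable f)
    (hfin : dirichletForm K f < ⊤) : MemLp (edgeDiff f) 2 K := by
  refine (memLp_two_iff_integrable_sq hf.edgeDiff.aestronglyMeasurable).2
    ⟨(hf.edgeDiff.pow_const 2).aestronglyMeasurable, ?_⟩
  simp only [HasFiniteIntegral, Real.enorm_eq_ofReal (sq_nonneg _)]
  rw [dirichletForm_eq_lintegral_edgeDiff] at hfin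
  exact ENNReal.lt_top_of_mul_ne_top_right hfin.ne (by norm_num)

theorem dirichletForm_eq_ofReal {f : Ω → ℝ} (hf : MemLp (edgeDiff f) 2 K) :
    dirichletForm K f = ENNReal.ofReal (2⁻¹ * ∫ p, edgeDiff f p ^ 2 ∂K) := by
  rw [dirichletForm_eq_lintegral_edgeDiff, ← ofReal_integral_eq_lintegral_ofReal hf.integrable_sq
    (ae_of_all _ fun p => sq_nonneg _), ENNReal.ofReal_mul (by norm_num), ENNReal.ofReal_inv_of_pos
    (by norm_num), ENNReal.ofReal_ofNat]

theorem dirichletForm_comp_le {φ : ℝ → ℝ} (hφ : LipschitzWith 1 φ) (f : Ω → ℝ) :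
    dirichletForm K (φ ∘ f) ≤ dirichletForm K f := by
  refine mul_le_mul_right (lintegral_mono fun p => ENNReal.ofReal_le_ofReal ?_) _
  simpa [Real.dist_eq, sq_le_sq] using hφ.dist_le_mul (f p.2) (f p.1)

end DirichletForm

section Minimizer

variable [MeasurableSpace Ω] {K : Measure (Ω × Ω)} {A B : Set Ω} {h : Ω → ℝ}

theorem dirichletForm_le_of_eq_cap (hmin : dirichletForm K h = Cap A B K) {f : Ω → ℝ}
    (hf : Measurable f) (hfA : ∀ x ∈ A, f x = 1) (hfB : ∀ x ∈ B, f x = 0)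
    (hfin : dirichletForm K f < ⊤) : dirichletForm K h ≤ dirichletForm K f := by
  have hclip : LipschitzWith 1 fun r => (projIcc (0 : ℝ) 1 zero_le_one r : ℝ) := by
    simpa [Function.comp_def] using
      (LipschitzWith.subtype_val _).comp (LipschitzWith.projIcc zero_le_one)
  have hle := dirichletForm_comp_le (K := K) hclip f
  have hmem : (fun x => (projIcc (0 : ℝ) 1 zero_le_one (f x) : ℝ)) ∈ VAB A B K :=
    ⟨hclip.continuous.measurable.comp hf, fun x hx => by simp [hfA x hx],
      fun x hx => by simp [hfB x hx], fun x => (projIcc 0 1 zero_le_one (f x)).2,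
      hle.trans_lt hfin⟩
  rw [hmin]
  exact (biInf_le _ hmem).trans hle

theorem integral_edgeDiff_mul_eq_zero_of_eq_cap (hh : h ∈ VAB A B K)
    (hmin : dirichletForm K h = Cap A B K) {g : Ω → ℝ} (hg : Measurable g)
    (hgA : ∀ x ∈ A, g x = 0) (hgB : ∀ x ∈ B, g x = 0) (hg2 : MemLp (edgeDiff g) 2 K) :
    ∫ p, edgeDiff h p * edgeDiff g p ∂K = 0 := by
  obtain ⟨hm, hA1, hB0, -, hfin⟩ := hh
  have hh2 := memLp_edgeDiff_of_dirichletForm_lt_top hm hfin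
  have hperturb : ∀ t : ℝ, 0 ≤ (∫ p, edgeDiff g p ^ 2 ∂K) * (t * t)
      + 2 * (∫ p, edgeDiff h p * edgeDiff g p ∂K) * t + 0 := by
    intro t
    have hf2 : MemLp (edgeDiff fun x => h x + t * g x) 2 K := by
      rw [edgeDiff_add_mul]; exact hh2.add (hg2.const_mul t)
    have hle := dirichletForm_le_of_eq_cap hmin (f := fun x => h x + t * g x)
      (hm.add (hg.const_mul t))
      (fun x hx => by simp [hA1 x hx, hgA x hx]) (fun x hx => by simp [hB0 x hx, hgB x hx])
      ((dirichletForm_eq_ofReal hf2).trans_lt ENNReal.ofReal_lt_top)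
    rw [dirichletForm_eq_ofReal hh2, dirichletForm_eq_ofReal hf2,
      ENNReal.ofReal_le_ofReal_iff (by positivity), edgeDiff_add_mul,
      integral_add_mul_sq hh2 hg2] at hle
    linarith
  have hdisc := discrim_le_zero hperturb
  rw [discrim] at hdisc
  nlinarith

theorem integral_edgeDiff_mul_eq_of_eq_cap (hh : h ∈ VAB A B K)
    (hmin : dirichletForm K h = Cap A B K) {f : Ω → ℝ} (hf : Measurable f)
    (hfA : ∀ x ∈ A, f x = 1) (hfB : ∀ x ∈ B, f x = 0) (hf2 : MemLp (edgeDiff f) 2 K) :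
    ∫ p, edgeDiff h p * edgeDiff f p ∂K = ∫ p, edgeDiff h p ^ 2 ∂K := by
  have hh2 := memLp_edgeDiff_of_dirichletForm_lt_top hh.1 hh.2.2.2.2
  have horth := integral_edgeDiff_mul_eq_zero_of_eq_cap hh hmin (g := fun x => f x - h x)
    (hf.sub hh.1) (fun x hx => by simp [hfA x hx, hh.2.1 x hx])
    (fun x hx => by simp [hfB x hx, hh.2.2.1 x hx]) (by rw [edgeDiff_sub]; exact hf2.sub hh2)
  have hsplit : ∫ p, edgeDiff h p * edgeDiff (fun x => f x - h x) p ∂K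
      = ∫ p, edgeDiff h p * edgeDiff f p ∂K - ∫ p, edgeDiff h p ^ 2 ∂K := by
    have hhf : Integrable (fun p => edgeDiff h p * edgeDiff f p) K := hh2.integrable_mul hf2
    rw [← integral_sub hhf hh2.integrable_sq, edgeDiff_sub]
    congr 1; funext p; ring
  linarith

end Minimizer

section Green

variable [MeasurableSpace Ω] {K : Measure (Ω × Ω)}

theorem isSFiniteKernel_of_forall_lt_top {α β : Type*} [MeasurableSpace α] [MeasurableSpace β]
    {k : Kernel α β} (hk : ∀ a, k a univ < ⊤) : IsSFiniteKernel k := by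
  set N : α → ℕ := fun a => ⌊(k a univ).toReal⌋₊
  have hs (n : ℕ) : MeasurableSet (N ⁻¹' {n}) :=
    (k.measurable_coe .univ).ennreal_toReal.nat_floor (measurableSet_singleton n)
  refine ⟨⟨fun n => Kernel.piecewise (hs n) k 0,
    fun n => ⟨⟨n + 1, by simp, fun a => ?_⟩⟩, ?_⟩⟩
  · rw [Kernel.piecewise_apply']
    split_ifs with ha
    · rw [← ENNReal.ofReal_toReal (hk a).ne, ← ENNReal.ofReal_natCast, ← ENNReal.ofReal_one,
        ← ENNReal.ofReal_add (by positivity) zero_le_one]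
      refine ENNReal.ofReal_le_ofReal (Nat.lt_floor_add_one _).le |>.trans_eq ?_
      rw [show ⌊(k a univ).toReal⌋₊ = n from ha]
    · simp
  · ext a t ht
    rw [Kernel.sum_apply' _ _ ht, tsum_eq_single (N a) fun n hn => ?_]
    · simp [Kernel.piecewise_apply', N]
    · simp [Kernel.piecewise_apply', Ne.symm hn]

theorem restrict_prod_univ_eq_compProd {k : Kernel Ω Ω} [IsSFiniteKernel k] {μ : Measure Ω}
    [SFinite μ] (hKrep : ∀ C D : Set Ω, MeasurableSet C → MeasurableSet D →
      K (C ×ˢ D) = ∫⁻ x in C, k x D ∂μ)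
    {C : Set Ω} (hC : MeasurableSet C) (hKC : K (C ×ˢ univ) < ⊤) :
    K.restrict (C ×ˢ univ) = μ.restrict C ⊗ₘ k := by
  have : IsFiniteMeasure (K.restrict (C ×ˢ univ)) := isFiniteMeasure_restrict.2 hKC.ne
  refine Measure.ext_prod fun {s t} hs ht => ?_
  rw [Measure.restrict_apply (hs.prod ht), Measure.compProd_apply_prod hs ht, prod_inter_prod,
    inter_univ, hKrep _ _ (hs.inter hC) ht, Measure.restrict_restrict hs]

theorem map_swap_restrict_univ_prod
    (hKsym : ∀ C D : Set Ω, MeasurableSet C → MeasurableSet D → K (C ×ˢ D) = K (D ×ˢ C))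
    {C : Set Ω} (hC : MeasurableSet C) (hKC : K (C ×ˢ univ) < ⊤) :
    (K.restrict (univ ×ˢ C)).map Prod.swap = K.restrict (C ×ˢ univ) := by
  have : IsFiniteMeasure (K.restrict (C ×ˢ univ)) := isFiniteMeasure_restrict.2 hKC.ne
  refine (Measure.ext_prod fun {s t} hs ht => ?_).symm
  rw [Measure.map_apply measurable_swap (hs.prod ht), preimage_swap_prod,
    Measure.restrict_apply (hs.prod ht), Measure.restrict_apply (ht.prod hs), prod_inter_prod,
    prod_inter_prod, inter_univ]
  exact hKsym _ _ (hs.inter hC) ht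

theorem memLp_edgeDiff_indicator_one
    (hKsym : ∀ C D : Set Ω, MeasurableSet C → MeasurableSet D → K (C ×ˢ D) = K (D ×ˢ C))
    {C : Set Ω} (hC : MeasurableSet C) (hKC : K (C ×ˢ univ) < ⊤) :
    MemLp (edgeDiff (C.indicator 1)) 2 K := by
  rw [edgeDiff_indicator_one]
  exact (memLp_indicator_const 2 (MeasurableSet.univ.prod hC) 1
    (.inr (by rw [hKsym _ _ .univ hC]; exact hKC.ne))).sub
    (memLp_indicator_const 2 (hC.prod .univ) 1 (.inr hKC.ne))

variable {k : Kernel Ω Ω} {μ : Measure Ω} {C : Set Ω} {h : Ω → ℝ} {M : ℝ}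

theorem setIntegral_negL_eq_neg_setIntegral_edgeDiff [IsSFiniteKernel k] [SFinite μ]
    (hKrep : ∀ C D : Set Ω, MeasurableSet C → MeasurableSet D →
      K (C ×ˢ D) = ∫⁻ x in C, k x D ∂μ)
    (hC : MeasurableSet C) (hKC : K (C ×ˢ univ) < ⊤) (hh : Measurable h)
    (hM : ∀ x, |h x| ≤ M) :
    ∫ x in C, negL k h x ∂μ = -∫ p in C ×ˢ univ, edgeDiff h p ∂K := by
  have : IsFiniteMeasure (K.restrict (C ×ˢ univ)) := isFiniteMeasure_restrict.2 hKC.ne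
  have hint := integrable_edgeDiff_of_abs_le (ν := K.restrict (C ×ˢ univ)) hh hM
  rw [restrict_prod_univ_eq_compProd hKrep hC hKC] at hint ⊢
  rw [← integral_neg, Measure.integral_compProd (f := fun p => -edgeDiff h p) hint.neg]
  simp [negL, edgeDiff]

theorem integral_edgeDiff_mul_edgeDiff_indicator_one [IsSFiniteKernel k] [SFinite μ]
    (hKrep : ∀ C D : Set Ω, MeasurableSet C → MeasurableSet D →
      K (C ×ˢ D) = ∫⁻ x in C, k x D ∂μ)
    (hKsym : ∀ C D : Set Ω, MeasurableSet C → MeasurableSet D → K (C ×ˢ D) = K (D ×ˢ C))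
    (hC : MeasurableSet C) (hKC : K (C ×ˢ univ) < ⊤) (hh : Measurable h)
    (hM : ∀ x, |h x| ≤ M) :
    ∫ p, edgeDiff h p * edgeDiff (C.indicator 1) p ∂K = 2 * ∫ x in C, negL k h x ∂μ := by
  have : IsFiniteMeasure (K.restrict (C ×ˢ univ)) := isFiniteMeasure_restrict.2 hKC.ne
  have hswap := map_swap_restrict_univ_prod hKsym hC hKC
  have : IsFiniteMeasure (K.restrict (univ ×ˢ C)) :=
    isFiniteMeasure_restrict.2 (by rw [hKsym _ _ .univ hC]; exact hKC.ne)
  have hin := integrable_edgeDiff_of_abs_le (ν := K.restrict (univ ×ˢ C)) hh hM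
  have hout := integrable_edgeDiff_of_abs_le (ν := K.restrict (C ×ˢ univ)) hh hM
  have hin_eq_neg_out :
      ∫ p in univ ×ˢ C, edgeDiff h p ∂K = -∫ p in C ×ˢ univ, edgeDiff h p ∂K := by
    rw [← hswap, integral_map measurable_swap.aemeasurable hh.edgeDiff.aestronglyMeasurable,
      ← integral_neg]
    simp [edgeDiff]
  calc ∫ p, edgeDiff h p * edgeDiff (C.indicator 1) p ∂K
      = ∫ p, ((univ ×ˢ C).indicator (edgeDiff h) p
          - (C ×ˢ univ).indicator (edgeDiff h) p) ∂K := by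
        rw [edgeDiff_indicator_one]
        congr 1; funext p
        simp [mul_sub, indicator_apply]
    _ = ∫ p in univ ×ˢ C, edgeDiff h p ∂K - ∫ p in C ×ˢ univ, edgeDiff h p ∂K := by
        rw [integral_sub ((integrable_indicator_iff (MeasurableSet.univ.prod hC)).2 hin)
          ((integrable_indicator_iff (hC.prod .univ)).2 hout),
          integral_indicator (MeasurableSet.univ.prod hC), integral_indicator (hC.prod .univ)]
    _ = 2 * ∫ x in C, negL k h x ∂μ := by
        rw [hin_eq_neg_out, setIntegral_negL_eq_neg_setIntegral_edgeDiff hKrep hC hKC hh hM]; ring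

end Green

end

theorem equilibrium_charges_general
    {Ω : Type*} [MeasurableSpace Ω]
    (k : Kernel Ω Ω) (hk : ∀ x, k x univ < ⊤)
    (μ : Measure Ω) [SigmaFinite μ]
    (K : Measure (Ω × Ω))
    (hKrep : ∀ C D : Set Ω, MeasurableSet C → MeasurableSet D →
      K (C ×ˢ D) = ∫⁻ x in C, k x D ∂μ)
    (hKsym : ∀ C D : Set Ω, MeasurableSet C → MeasurableSet D → K (C ×ˢ D) = K (D ×ˢ C))
    (A B : Set Ω) (hA : MeasurableSet A) (hB : MeasurableSet B) (hd : Disjoint A B)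
    (hKAB : K ((A ∪ B) ×ˢ univ) < ⊤)
    (hAB : Ω → ℝ) (hABmem : hAB ∈ VAB A B K) (hABmin : dirichletForm K hAB = Cap A B K) :
    ∫ x in A, negL k hAB x ∂μ = (Cap A B K).toReal ∧
    ∫ x in B, negL k hAB x ∂μ = -(Cap A B K).toReal := by
  have := isSFiniteKernel_of_forall_lt_top hk
  obtain ⟨hm, -, -, h01, hfin⟩ := id hABmem
  have hbdd : ∀ x, |hAB x| ≤ 1 := fun x => abs_le.2 ⟨by linarith [(h01 x).1], (h01 x).2⟩
  have hKA : K (A ×ˢ univ) < ⊤ :=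
    (measure_mono (prod_mono subset_union_left le_rfl)).trans_lt hKAB
  have hKB : K (B ×ˢ univ) < ⊤ :=
    (measure_mono (prod_mono subset_union_right le_rfl)).trans_lt hKAB
  have hcap : (Cap A B K).toReal = 2⁻¹ * ∫ p, edgeDiff hAB p ^ 2 ∂K := by
    rw [← hABmin, dirichletForm_eq_ofReal (memLp_edgeDiff_of_dirichletForm_lt_top hm hfin),
      ENNReal.toReal_ofReal (by positivity)]
  have hQA := integral_edgeDiff_mul_eq_of_eq_cap hABmem hABmin (measurable_one.indicator hA)
    (fun x hx => indicator_of_mem hx 1)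
    (fun x hx => indicator_of_notMem (hd.notMem_of_mem_right hx) 1)
    (memLp_edgeDiff_indicator_one hKsym hA hKA)
  have hQB := integral_edgeDiff_mul_eq_of_eq_cap hABmem hABmin
    (f := fun x => 1 - B.indicator 1 x) (measurable_const.sub (measurable_one.indicator hB))
    (fun x hx => by simp [indicator_of_notMem (hd.notMem_of_mem_left hx)])
    (fun x hx => by simp [indicator_of_mem hx])
    (by rw [edgeDiff_const_sub]; exact (memLp_edgeDiff_indicator_one hKsym hB hKB).neg)
  rw [integral_edgeDiff_mul_edgeDiff_indicator_one hKrep hKsym hA hKA hm hbdd] at hQA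
  simp only [edgeDiff_const_sub, mul_neg, integral_neg,
    integral_edgeDiff_mul_edgeDiff_indicator_one hKrep hKsym hB hKB hm hbdd] at hQB
  constructor <;> linarith

/-- **Equilibrium charges**: `Q_A = Cap(A,B)` and `Q_B = -Cap(A,B)`. -/
theorem equilibrium_charges
    {Ω : Type*} [MeasurableSpace Ω] [TopologicalSpace Ω] [PolishSpace Ω] [BorelSpace Ω]
    (k : Kernel Ω Ω) (hk : ∀ x, k x univ < ⊤)
    (μ : Measure Ω) [SigmaFinite μ]
    (K : Measure (Ω × Ω)) [SigmaFinite K]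
    (hKrep : ∀ C D : Set Ω, MeasurableSet C → MeasurableSet D →
      K (C ×ˢ D) = ∫⁻ x in C, k x D ∂μ)
    (hKsym : ∀ C D : Set Ω, MeasurableSet C → MeasurableSet D → K (C ×ˢ D) = K (D ×ˢ C))
    (A B : Set Ω) (hA : MeasurableSet A) (hB : MeasurableSet B) (hd : Disjoint A B)
    (hμA : 0 < μ A) (hμB : 0 < μ B)
    (hKAB : K ((A ∪ B) ×ˢ univ) < ⊤) (hne : (VAB A B K).Nonempty)
    (hAB : Ω → ℝ) (hABmem : hAB ∈ VAB A B K) (hABmin : dirichletForm K hAB = Cap A B K) :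
    ∫ x in A, negL k hAB x ∂μ = (Cap A B K).toReal ∧
    ∫ x in B, negL k hAB x ∂μ = -(Cap A B K).toReal :=
  equilibrium_charges_general k hk μ K hKrep hKsym A B hA hB hd hKAB hAB hABmem hABmin
end
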